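/- arXiv:2509.06016 — 2 statements merged into one kernel-verified Lean document; each statement's English description precedes it below -/
import Mathlib

section
/- Let X be a process on a probability space that, under the measure P, is a Markov chain with respect to its natural filtration F_n = σ(X_0,…,X_n) with F_{n-1}-measurable random stochastic transition matrices P_n, and that, under a second measure P_0 with the same initial distribution of X_0, is a stationary (time-homogeneous) Markov chain with a constant transition matrix P_0 satisfying P_0(i,j) > 0 for all states i,j. Then for every n the restriction of P to F_n is absolutely continuous with respect to the restriction of P_0 to F_n, and the Radon–Nikodym derivative is dP/dP_0 |_{F_n} = ∏_{k=1}^{n} P_k(X_{k-1}, X_k) / P_0(X_{k-1}, X_k), P_0-almost surely. -/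
/-!
Induction on `n`, showing that `P` and `P₀` weighted by the likelihood ratio `Z n` agree on `F n`.
As `X` is finite-valued, `F (n + 1) = F n ⊔ σ(X (n + 1))` is generated by the π-system of the sets
`t ∩ {X (n + 1) = j}` with `t ∈ F n`. Seen from `F n`, the Markov property says that `P` restricted
to `{X (n + 1) = j}` has density `Pn (n + 1) (X n, j)` with respect to `P`, and `P₀` restricted to
it has density `P₀mat (X n, j)` with respect to `P₀`. With the induction hypothesis, both
`P (t ∩ {X (n + 1) = j})` and `∫⁻ ω in t ∩ {X (n + 1) = j}, Z (n + 1) ∂P₀` then equal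
`∫⁻ ω in t, Z n * Pn (n + 1) (X n, j) ∂P₀`, the second after dividing by `P₀mat (X n, j) > 0`.
-/

open MeasureTheory Finset

/-- A (real `N × N`) stochastic matrix: nonnegative entries, each row summing to 1. -/
def IsStochasticMatrix {N : ℕ} (P : Matrix (Fin N) (Fin N) ℝ) : Prop :=
  (∀ i j, 0 ≤ P i j) ∧ ∀ i, ∑ j, P i j = 1

/-- The natural filtration `F n = σ(X 0, …, X n)` of a process `X`. -/
noncomputable def natFiltration {Ω : Type*} [m : MeasurableSpace Ω] {N : ℕ}
    (X : ℕ → Ω → Fin N) (hX : ∀ n, Measurable (X n)) : Filtration ℕ m where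
  seq n := ⨆ k ∈ Set.Iic n, MeasurableSpace.comap (X k) inferInstance
  mono' := fun _ _ hab => biSup_mono fun _ hk => le_trans hk hab
  le' := fun _ => iSup₂_le fun k _ => (hX k).comap_le

/-- Indicator (as a real-valued function) of the event `{X n = j}`. -/
def ind {Ω : Type*} {N : ℕ} (X : ℕ → Ω → Fin N) (n : ℕ) (j : Fin N) : Ω → ℝ :=
  fun ω => if X n ω = j then 1 else 0

/-- `X` is a Markov chain under `Q` with respect to the filtration `F`, with
(random, `F (n-1)`-measurable) transition matrices `P n`:
`Q(X n = j | F (n-1)) = P n (X (n-1)) j` a.s. for all `n ≥ 1` and all states `j`. -/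
def IsMarkovChainWith {Ω : Type*} [m : MeasurableSpace Ω] {N : ℕ}
    (Q : Measure Ω) (F : Filtration ℕ m) (X : ℕ → Ω → Fin N)
    (P : ℕ → Ω → Matrix (Fin N) (Fin N) ℝ) : Prop :=
  ∀ n, 1 ≤ n → ∀ j : Fin N,
    Q[ind X n j | F (n - 1)] =ᵐ[Q] fun ω => P n ω (X (n - 1) ω) j

/-- The likelihood-ratio process `Z n = ∏_{k=1}^n P k (X (k-1), X k) / P₀ (X (k-1), X k)`. -/
noncomputable def lr {Ω : Type*} {N : ℕ} (X : ℕ → Ω → Fin N)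
    (P : ℕ → Ω → Matrix (Fin N) (Fin N) ℝ) (P₀ : Matrix (Fin N) (Fin N) ℝ)
    (n : ℕ) (ω : Ω) : ℝ :=
  ∏ k ∈ Finset.Icc 1 n, P k ω (X (k - 1) ω) (X k ω) / P₀ (X (k - 1) ω) (X k ω)

open scoped ENNReal

theorem Measurable.apply_of_countable {α ι β : Type*} {mα : MeasurableSpace α}
    [MeasurableSpace ι] [Countable ι] [MeasurableSingletonClass ι] [MeasurableSpace β]
    {M : α → ι → β} (hM : ∀ i, Measurable fun a => M a i) {f : α → ι} (hf : Measurable f) :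
    Measurable fun a => M a (f a) :=
  (measurable_from_prod_countable_left (f := fun p : α × ι => M p.1 p.2) hM).comp
    (measurable_id.prodMk hf)

theorem trim_restrict_eq_trim_withDensity_of_condExp_indicator {Ω : Type*}
    {m m₀ : MeasurableSpace Ω} {μ : Measure[m₀] Ω} [IsFiniteMeasure μ] (hm : m ≤ m₀)
    {A : Set Ω} (hA : MeasurableSet A) {g : Ω → ℝ} (hg : μ[A.indicator 1 | m] =ᵐ[μ] g) :
    (μ.restrict A).trim hm = (μ.withDensity fun ω => ENNReal.ofReal (g ω)).trim hm := by
  have h_int : Integrable (A.indicator (1 : Ω → ℝ)) μ := (integrable_const 1).indicator hA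
  have hg_nonneg : 0 ≤ᵐ[μ] g := by
    refine (condExp_nonneg ?_).trans hg.le
    exact ae_of_all _ (Set.indicator_nonneg fun _ _ => zero_le_one)
  refine @Measure.ext _ m _ _ fun t ht => ?_
  rw [trim_measurableSet_eq hm ht, trim_measurableSet_eq hm ht, Measure.restrict_apply (hm t ht),
    withDensity_apply _ (hm t ht), ← ofReal_integral_eq_lintegral_ofReal
      (integrable_condExp.congr hg).restrict (ae_restrict_of_ae hg_nonneg),
    ← setIntegral_congr_ae (hm t ht) (hg.mono fun _ h _ => h), setIntegral_condExp hm h_int ht,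
    integral_indicator_one hA, ofReal_measureReal, Measure.restrict_apply hA, Set.inter_comm]

theorem ext_on_sup_comap_of_inter_preimage_singleton {Ω α : Type*} {m m₀ : MeasurableSpace Ω}
    [MeasurableSpace α] [Countable α] [MeasurableSingletonClass α] {Y : Ω → α}
    (hm : m ≤ m₀) (hY : Measurable[m₀] Y) {μ ν : Measure[m₀] Ω} [IsFiniteMeasure μ]
    (h : ∀ t, MeasurableSet[m] t → ∀ a, μ (t ∩ Y ⁻¹' {a}) = ν (t ∩ Y ⁻¹' {a}))
    {s : Set Ω} (hs : MeasurableSet[m ⊔ MeasurableSpace.comap Y ‹_›] s) : μ s = ν s := by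
  have h_fibres (t : Set Ω) : t = ⋃ a, t ∩ Y ⁻¹' {a} := by
    rw [← Set.inter_iUnion, ← Set.preimage_iUnion, Set.iUnion_of_singleton, Set.preimage_univ,
      Set.inter_univ]
  set C : Set (Set Ω) := {u | ∃ t, MeasurableSet[m] t ∧ ∃ a, u = t ∩ Y ⁻¹' {a}}
  have hC_pi : IsPiSystem C := by
    rintro _ ⟨t₁, ht₁, a₁, rfl⟩ _ ⟨t₂, ht₂, a₂, rfl⟩ -
    obtain rfl | ha := eq_or_ne a₁ a₂
    · exact ⟨t₁ ∩ t₂, ht₁.inter ht₂, a₁, Set.ext fun ω => by simp only [Set.mem_inter_iff]; tauto⟩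
    · refine ⟨∅, @MeasurableSet.empty _ m, a₁, Set.ext fun ω => ?_⟩
      simp only [Set.mem_inter_iff, Set.mem_preimage, Set.mem_singleton_iff, Set.empty_inter,
        Set.mem_empty_iff_false, iff_false]
      rintro ⟨⟨-, rfl⟩, -, h⟩
      exact ha h
  have hC_gen : m ⊔ MeasurableSpace.comap Y ‹_› = MeasurableSpace.generateFrom C := by
    refine le_antisymm (sup_le (fun t ht => ?_) ?_) (MeasurableSpace.generateFrom_le ?_)
    · rw [h_fibres t]
      exact .iUnion fun a => MeasurableSpace.measurableSet_generateFrom ⟨t, ht, a, rfl⟩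
    · refine (@measurable_to_countable' _ _ _ _ (_) _ fun a => ?_).comap_le
      exact MeasurableSpace.measurableSet_generateFrom
        ⟨_, @MeasurableSet.univ _ m, a, (Set.univ_inter _).symm⟩
    · rintro _ ⟨t, ht, a, rfl⟩
      exact (le_sup_left (b := MeasurableSpace.comap Y ‹_›) t ht).inter
        (le_sup_right (a := m) _ ⟨_, measurableSet_singleton a, rfl⟩)
  have h_univ : μ Set.univ = ν Set.univ := by
    have h_disj : Pairwise (Function.onFun Disjoint fun a => Set.univ ∩ Y ⁻¹' {a}) :=
      fun a b hab => Set.disjoint_left.2 fun _ h₁ h₂ => hab (h₁.2.symm.trans h₂.2)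
    have h_meas (a : α) : MeasurableSet (Set.univ ∩ Y ⁻¹' {a}) :=
      .inter .univ (hY (measurableSet_singleton a))
    rw [h_fibres Set.univ, measure_iUnion h_disj h_meas, measure_iUnion h_disj h_meas]
    exact tsum_congr (h _ (@MeasurableSet.univ _ m))
  exact ext_on_measurableSpace_of_generate_finite m₀ C (fun _ ⟨t, ht, a, hu⟩ => hu ▸ h t ht a)
    (sup_le hm hY.comap_le) hC_gen hC_pi h_univ hs

theorem ind_eq_indicator {Ω : Type*} {N : ℕ} (X : ℕ → Ω → Fin N) (n : ℕ) (j : Fin N) :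
    ind X n j = (X n ⁻¹' {j}).indicator 1 := by
  ext ω
  by_cases h : X n ω = j <;> simp [ind, h]

section MarkovChain

variable {Ω : Type*} [m : MeasurableSpace Ω] {N : ℕ}

theorem IsMarkovChainWith.trim_restrict_eq {Q : Measure Ω} [IsFiniteMeasure Q]
    {F : Filtration ℕ m} {X : ℕ → Ω → Fin N} {P : ℕ → Ω → Matrix (Fin N) (Fin N) ℝ}
    (hQ : IsMarkovChainWith Q F X P) (hX : ∀ n, Measurable (X n)) (n : ℕ) (j : Fin N) :
    (Q.restrict (X (n + 1) ⁻¹' {j})).trim (F.le n) =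
      (Q.withDensity fun ω => ENNReal.ofReal (P (n + 1) ω (X n ω) j)).trim (F.le n) := by
  have h := hQ (n + 1) n.succ_pos j
  rw [Nat.add_sub_cancel, ind_eq_indicator] at h
  exact trim_restrict_eq_trim_withDensity_of_condExp_indicator _
    (hX (n + 1) (measurableSet_singleton j)) h

variable {X : ℕ → Ω → Fin N} {hX : ∀ n, Measurable (X n)}

theorem measurable_natFiltration {k n : ℕ} (hkn : k ≤ n) :
    Measurable[natFiltration X hX n] (X k) :=
  measurable_iff_comap_le.2 (le_iSup₂ (f := fun k (_ : k ∈ Set.Iic n) =>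
    MeasurableSpace.comap (X k) inferInstance) k hkn)

theorem natFiltration_zero :
    natFiltration X hX 0 = MeasurableSpace.comap (X 0) inferInstance :=
  le_antisymm (iSup₂_le fun k hk => by rw [Set.mem_Iic.1 hk |>.antisymm k.zero_le])
    (measurable_natFiltration le_rfl).comap_le

theorem natFiltration_succ (n : ℕ) :
    natFiltration X hX (n + 1) =
      natFiltration X hX n ⊔ MeasurableSpace.comap (X (n + 1)) inferInstance := by
  refine le_antisymm (iSup₂_le fun k hk => ?_)
    (sup_le ((natFiltration X hX).mono n.le_succ) (measurable_natFiltration le_rfl).comap_le)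
  obtain hkn | rfl := (Set.mem_Iic.1 hk).lt_or_eq
  · exact le_sup_of_le_left (measurable_natFiltration (Nat.lt_succ_iff.1 hkn)).comap_le
  · exact le_sup_right

variable {P₀mat : Matrix (Fin N) (Fin N) ℝ} {Pn : ℕ → Ω → Matrix (Fin N) (Fin N) ℝ}

omit m in
theorem lr_zero : lr X Pn P₀mat 0 = 1 := by
  ext ω
  simp [lr]

omit m in
theorem lr_succ (n : ℕ) (ω : Ω) :
    lr X Pn P₀mat (n + 1) ω =
      lr X Pn P₀mat n ω * (Pn (n + 1) ω (X n ω) (X (n + 1) ω) / P₀mat (X n ω) (X (n + 1) ω)) := by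
  rw [lr, Finset.prod_Icc_succ_top (Nat.le_add_left 1 n), Nat.add_sub_cancel]
  rfl

theorem measurable_lr
    (hPn_meas : ∀ n, 1 ≤ n → ∀ i j, Measurable[natFiltration X hX (n - 1)] fun ω => Pn n ω i j)
    (n : ℕ) : Measurable[natFiltration X hX n] (lr X Pn P₀mat n) := by
  induction n with
  | zero => rw [lr_zero]; exact measurable_const
  | succ n ih =>
    have h_entry (i j : Fin N) :
        Measurable[natFiltration X hX (n + 1)] fun ω => Pn (n + 1) ω i j / P₀mat i j :=
      ((hPn_meas (n + 1) n.succ_pos i j).mono ((natFiltration X hX).mono n.le_succ)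
        le_rfl).div_const _
    have h_step : Measurable[natFiltration X hX (n + 1)] fun ω =>
        Pn (n + 1) ω (X n ω) (X (n + 1) ω) / P₀mat (X n ω) (X (n + 1) ω) :=
      Measurable.apply_of_countable (fun j => Measurable.apply_of_countable (h_entry · j)
        (measurable_natFiltration n.le_succ)) (measurable_natFiltration le_rfl)
    rw [show lr X Pn P₀mat (n + 1) = _ from funext (lr_succ n)]
    exact (ih.mono ((natFiltration X hX).mono n.le_succ) le_rfl).mul h_step

variable {P P₀ : Measure Ω} [IsFiniteMeasure P] [IsFiniteMeasure P₀]

theorem trim_restrict_eq_trim_restrict_withDensity_lr_succ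
    (hPn_meas : ∀ n, 1 ≤ n → ∀ i j, Measurable[natFiltration X hX (n - 1)] fun ω => Pn n ω i j)
    (hPn_nonneg : ∀ n, 1 ≤ n → ∀ ω i j, 0 ≤ Pn n ω i j) (hP₀_pos : ∀ i j, 0 < P₀mat i j)
    (hMarkov : IsMarkovChainWith P (natFiltration X hX) X Pn)
    (hMarkov₀ : IsMarkovChainWith P₀ (natFiltration X hX) X fun _ _ => P₀mat) (n : ℕ)
    (ih : P.trim ((natFiltration X hX).le n) =
      (P₀.withDensity fun ω => ENNReal.ofReal (lr X Pn P₀mat n ω)).trim ((natFiltration X hX).le n))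
    (j : Fin N) :
    (P.restrict (X (n + 1) ⁻¹' {j})).trim ((natFiltration X hX).le n) =
      ((P₀.withDensity fun ω => ENNReal.ofReal (lr X Pn P₀mat (n + 1) ω)).restrict
        (X (n + 1) ⁻¹' {j})).trim ((natFiltration X hX).le n) := by
  set F := natFiltration X hX
  set A := X (n + 1) ⁻¹' {j}
  have hA : MeasurableSet A := hX (n + 1) (measurableSet_singleton j)
  set Z : Ω → ℝ≥0∞ := fun ω => ENNReal.ofReal (lr X Pn P₀mat n ω)
  set q : Ω → ℝ≥0∞ := fun ω => ENNReal.ofReal (Pn (n + 1) ω (X n ω) j)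
  set p : Ω → ℝ≥0∞ := fun ω => ENNReal.ofReal (P₀mat (X n ω) j)
  set r : Ω → ℝ≥0∞ := fun ω => ENNReal.ofReal (Pn (n + 1) ω (X n ω) j / P₀mat (X n ω) j)
  have hZ : Measurable[F n] Z := (measurable_lr hPn_meas n).ennreal_ofReal
  have hq : Measurable[F n] q := (Measurable.apply_of_countable
    (fun i => hPn_meas (n + 1) n.succ_pos i j) (measurable_natFiltration le_rfl)).ennreal_ofReal
  have hp : Measurable[F n] p := (Measurable.apply_of_countable (M := fun _ i => P₀mat i j)
    (fun _ => measurable_const) (measurable_natFiltration le_rfl)).ennreal_ofReal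
  have hr : Measurable[F n] r := (Measurable.apply_of_countable
    (fun i => (hPn_meas (n + 1) n.succ_pos i j).div_const (P₀mat i j))
    (measurable_natFiltration le_rfl)).ennreal_ofReal
  have hZr : Measurable[F n] (Z * r) := hZ.mul hr
  have h_factor : Z * q = p * (Z * r) := by
    ext ω
    simp only [Pi.mul_apply, Z, q, p, r]
    rw [mul_left_comm, ← ENNReal.ofReal_mul (hP₀_pos _ _).le, mul_div_cancel₀ _ (hP₀_pos _ _).ne']
  have h_on_A : Z * r =ᵐ[P₀.restrict A] fun ω => ENNReal.ofReal (lr X Pn P₀mat (n + 1) ω) := by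
    filter_upwards [ae_restrict_mem hA] with ω (hω : X (n + 1) ω = j)
    rw [Pi.mul_apply, lr_succ, hω, ENNReal.ofReal_mul'
      (div_nonneg (hPn_nonneg _ n.succ_pos _ _ _) (hP₀_pos _ _).le)]
  have hm := F.le n
  calc (P.restrict A).trim hm
      = (P.withDensity q).trim hm := hMarkov.trim_restrict_eq hX n j
    _ = (P.trim hm).withDensity q := trim_withDensity hm hq
    _ = ((P₀.withDensity Z).withDensity q).trim hm := by rw [ih, trim_withDensity hm hq]
    _ = ((P₀.withDensity p).withDensity (Z * r)).trim hm := by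
      rw [← withDensity_mul _ (hZ.mono hm le_rfl) (hq.mono hm le_rfl), h_factor,
        withDensity_mul _ (hp.mono hm le_rfl) (hZr.mono hm le_rfl)]
    _ = ((P₀.withDensity p).trim hm).withDensity (Z * r) := trim_withDensity hm hZr
    _ = ((P₀.restrict A).trim hm).withDensity (Z * r) := by
      rw [hMarkov₀.trim_restrict_eq hX n j]
    _ = ((P₀.withDensity fun ω => ENNReal.ofReal (lr X Pn P₀mat (n + 1) ω)).restrict A).trim
          hm := by
      rw [← trim_withDensity hm hZr, withDensity_congr_ae h_on_A, restrict_withDensity hA]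

theorem trim_eq_trim_withDensity_lr
    (hPn_meas : ∀ n, 1 ≤ n → ∀ i j, Measurable[natFiltration X hX (n - 1)] fun ω => Pn n ω i j)
    (hPn_nonneg : ∀ n, 1 ≤ n → ∀ ω i j, 0 ≤ Pn n ω i j) (hP₀_pos : ∀ i j, 0 < P₀mat i j)
    (hMarkov : IsMarkovChainWith P (natFiltration X hX) X Pn)
    (hMarkov₀ : IsMarkovChainWith P₀ (natFiltration X hX) X fun _ _ => P₀mat)
    (hInit : P.map (X 0) = P₀.map (X 0)) (n : ℕ) :
    P.trim ((natFiltration X hX).le n) =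
      (P₀.withDensity fun ω => ENNReal.ofReal (lr X Pn P₀mat n ω)).trim
        ((natFiltration X hX).le n) := by
  induction n with
  | zero =>
    refine @Measure.ext _ (natFiltration X hX 0) _ _ fun s hs => ?_
    rw [trim_measurableSet_eq _ hs, trim_measurableSet_eq _ hs]
    rw [natFiltration_zero] at hs
    obtain ⟨u, hu, rfl⟩ := hs
    simp only [lr_zero, Pi.one_apply, ENNReal.ofReal_one, withDensity_const, one_smul]
    rw [← Measure.map_apply (hX 0) hu, hInit, Measure.map_apply (hX 0) hu]
  | succ n ih =>
    refine @Measure.ext _ (natFiltration X hX (n + 1)) _ _ fun s hs => ?_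
    rw [trim_measurableSet_eq _ hs, trim_measurableSet_eq _ hs]
    rw [natFiltration_succ] at hs
    refine ext_on_sup_comap_of_inter_preimage_singleton ((natFiltration X hX).le n) (hX (n + 1))
      (fun t ht j => ?_) hs
    have h_step := trim_restrict_eq_trim_restrict_withDensity_lr_succ hPn_meas hPn_nonneg
      hP₀_pos hMarkov hMarkov₀ n ih j
    simpa only [trim_measurableSet_eq _ ht, Measure.restrict_apply ((natFiltration X hX).le n t ht)]
      using congrArg (· t) h_step

end MarkovChain

theorem discrete_girsanov_sufficiency_general
    {Ω : Type*} [m : MeasurableSpace Ω] {N : ℕ}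
    (X : ℕ → Ω → Fin N) (hX : ∀ n, Measurable (X n))
    (P P₀ : Measure Ω) [IsProbabilityMeasure P] [IsProbabilityMeasure P₀]
    (Pn : ℕ → Ω → Matrix (Fin N) (Fin N) ℝ) (P₀mat : Matrix (Fin N) (Fin N) ℝ)
    (hPn_meas : ∀ n, 1 ≤ n → ∀ i j,
      Measurable[(natFiltration X hX) (n - 1)] fun ω => Pn n ω i j)
    (hPn_stoch : ∀ n, 1 ≤ n → ∀ ω, IsStochasticMatrix (Pn n ω))
    (hP₀_pos : ∀ i j, 0 < P₀mat i j)
    (hMarkov : IsMarkovChainWith P (natFiltration X hX) X Pn)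
    (hMarkov₀ : IsMarkovChainWith P₀ (natFiltration X hX) X fun _ _ => P₀mat)
    (hInit : P.map (X 0) = P₀.map (X 0)) :
    ∀ n : ℕ,
      P.trim ((natFiltration X hX).le n) ≪ P₀.trim ((natFiltration X hX).le n) ∧
      ∀ s : Set Ω, MeasurableSet[(natFiltration X hX) n] s →
        P s = ∫⁻ ω in s, ENNReal.ofReal (lr X Pn P₀mat n ω) ∂P₀ := by
  intro n
  have h_trim := trim_eq_trim_withDensity_lr hPn_meas (fun n hn ω => (hPn_stoch n hn ω).1)
    hP₀_pos hMarkov hMarkov₀ hInit n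
  refine ⟨h_trim ▸ (withDensity_absolutelyContinuous _ _).trim _, fun s hs => ?_⟩
  rw [← trim_measurableSet_eq ((natFiltration X hX).le n) hs, h_trim, trim_measurableSet_eq _ hs,
    withDensity_apply _ ((natFiltration X hX).le n s hs)]

/-- If `X` is, under `P`, a Markov chain with respect to its natural
filtration with `F (n-1)`-measurable random stochastic transition matrices `Pn n`, and
under `P₀` (with the same initial distribution) a stationary Markov chain with constant
transition matrix `P₀mat` having strictly positive entries, then for every `n` the
restriction of `P` to `F n` is absolutely continuous with respect to that of `P₀`, with
density `∏_{k=1}^n Pn k (X (k-1), X k) / P₀mat (X (k-1), X k)`. -/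
theorem discrete_girsanov_sufficiency
    {Ω : Type*} [m : MeasurableSpace Ω] {N : ℕ} (hN : 1 ≤ N)
    (X : ℕ → Ω → Fin N) (hX : ∀ n, Measurable (X n))
    (P P₀ : Measure Ω) [IsProbabilityMeasure P] [IsProbabilityMeasure P₀]
    (Pn : ℕ → Ω → Matrix (Fin N) (Fin N) ℝ) (P₀mat : Matrix (Fin N) (Fin N) ℝ)
    (hPn_meas : ∀ n, 1 ≤ n → ∀ i j,
      Measurable[(natFiltration X hX) (n - 1)] fun ω => Pn n ω i j)
    (hPn_stoch : ∀ n, 1 ≤ n → ∀ ω, IsStochasticMatrix (Pn n ω))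
    (hP₀_stoch : IsStochasticMatrix P₀mat)
    (hP₀_pos : ∀ i j, 0 < P₀mat i j)
    (hMarkov : IsMarkovChainWith P (natFiltration X hX) X Pn)
    (hMarkov₀ : IsMarkovChainWith P₀ (natFiltration X hX) X fun _ _ => P₀mat)
    (hInit : P.map (X 0) = P₀.map (X 0)) :
    ∀ n : ℕ,
      P.trim ((natFiltration X hX).le n) ≪ P₀.trim ((natFiltration X hX).le n) ∧
      ∀ s : Set Ω, MeasurableSet[(natFiltration X hX) n] s →
        P s = ∫⁻ ω in s, ENNReal.ofReal (lr X Pn P₀mat n ω) ∂P₀ :=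
  discrete_girsanov_sufficiency_general (m := m) X hX P P₀ Pn P₀mat hPn_meas hPn_stoch hP₀_pos
    hMarkov hMarkov₀ hInit
end

section
/- Let X be a process with values in S = {1,…,N} on a probability space (Ω, 𝒜, P_0), with natural filtration F_n = σ(X_0,…,X_n). Fix n ≥ 1 and assume that the conditional law of X_n given F_{n-1} under P_0 is P_0(X_{n-1}, ·), where P_0 is a stochastic matrix with P_0(i,j) > 0 for all i,j. Then for every integrable F_n-measurable random variable Y_n with E_0[Y_n | F_{n-1}] = 0 a.s., there exist F_{n-1}-measurable real random variables G_{n,1},…,G_{n,N} such that Y_n = ∑_{j=1}^N G_{n,j} (𝟙{X_n = j} − P_0(X_{n-1}, j)), P_0-almost surely. -/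
open MeasureTheory Finset

/-!
Since `F n = σ(X 0, …, X n)` and the state space is finite, `Y` is a function of the history
`(X 0, …, X n)`; replacing the last state by `j` yields an `F (n - 1)`-measurable `G j` with
`Y = G (X n)`, i.e. `Y = ∑ j, G j * 𝟙{X n = j}`. Pulling the `G j` out of the conditional
expectation gives `E₀[Y | F (n - 1)] = ∑ j, G j * P₀mat (X (n - 1), j)`, which vanishes by
assumption, and subtracting it from `Y` is the representation.
-/

section CondExpSelect

variable {Ω ι : Type*} [DecidableEq ι] {Z : Ω → ι} {G : ι → Ω → ℝ}

lemma mul_ite_eq_indicator (j : ι) :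
    (fun ω => G j ω * if Z ω = j then 1 else 0) = (Z ⁻¹' {j}).indicator fun ω => G (Z ω) ω := by
  ext ω
  by_cases h : Z ω = j <;> simp [h]

variable [Fintype ι]

lemma select_eq_sum_mul_ite :
    (fun ω => G (Z ω) ω) = ∑ j, fun ω => G j ω * if Z ω = j then 1 else 0 := by
  ext ω
  simp

variable [MeasurableSpace ι] [MeasurableSingletonClass ι] {m m0 : MeasurableSpace Ω} {μ : Measure Ω}
  {p : ι → Ω → ℝ}

lemma condExp_select_eq_sum [IsFiniteMeasure μ] (hZ : Measurable Z)
    (hG : ∀ j, StronglyMeasurable[m] (G j))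
    (hp : ∀ j, μ[fun ω => if Z ω = j then 1 else 0 | m] =ᵐ[μ] p j)
    (hY : Integrable (fun ω => G (Z ω) ω) μ) :
    μ[fun ω => G (Z ω) ω | m] =ᵐ[μ] fun ω => ∑ j, G j ω * p j ω := by
  have hfiber (j : ι) : MeasurableSet (Z ⁻¹' {j}) := hZ (measurableSet_singleton j)
  have hselect (j : ι) : Integrable (fun ω => G j ω * if Z ω = j then 1 else 0) μ := by
    rw [mul_ite_eq_indicator]
    exact hY.indicator (hfiber j)
  have hind (j : ι) : Integrable (fun ω => if Z ω = j then (1 : ℝ) else 0) μ := by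
    have hfun : (fun ω => if Z ω = j then (1 : ℝ) else 0) = (Z ⁻¹' {j}).indicator 1 := by
      ext ω
      by_cases h : Z ω = j <;> simp [h]
    rw [hfun]
    exact (integrable_const (1 : ℝ)).indicator (hfiber j)
  have hpull (j : ι) : μ[fun ω => G j ω * if Z ω = j then 1 else 0 | m]
      =ᵐ[μ] fun ω => G j ω * p j ω :=
    (condExp_mul_of_stronglyMeasurable_left (hG j) (hselect j) (hind j)).trans
      ((hp j).mono fun ω hω => by simp only [Pi.mul_apply, hω])
  rw [select_eq_sum_mul_ite]
  refine (condExp_finsetSum (fun j _ => hselect j) _).trans ?_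
  filter_upwards [ae_all_iff.mpr hpull] with ω hω
  simp only [Finset.sum_apply, hω]

lemma eq_sum_mul_sub_of_condExp_eq_zero [IsFiniteMeasure μ] (hZ : Measurable Z)
    (hG : ∀ j, StronglyMeasurable[m] (G j))
    (hp : ∀ j, μ[fun ω => if Z ω = j then 1 else 0 | m] =ᵐ[μ] p j)
    (hY : Integrable (fun ω => G (Z ω) ω) μ) (hY0 : μ[fun ω => G (Z ω) ω | m] =ᵐ[μ] 0) :
    (fun ω => G (Z ω) ω) =ᵐ[μ] fun ω => ∑ j, G j ω * ((if Z ω = j then 1 else 0) - p j ω) := by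
  filter_upwards [(condExp_select_eq_sum hZ hG hp hY).symm.trans hY0] with ω hω
  simp only [mul_sub, Finset.sum_sub_distrib, Pi.zero_apply] at hω ⊢
  rw [hω, sub_zero, congrFun (select_eq_sum_mul_ite (G := G) (Z := Z)) ω, Finset.sum_apply]

end CondExpSelect

def history {Ω : Type*} {N : ℕ} (X : ℕ → Ω → Fin N) (n : ℕ) (ω : Ω) : Fin (n + 1) → Fin N :=
  fun i => X i ω

section NatFiltration

variable {Ω : Type*} [MeasurableSpace Ω] {N : ℕ} {X : ℕ → Ω → Fin N}

lemma measurable_natFiltration_of_le (hX : ∀ n, Measurable (X n)) {k n : ℕ} (hk : k ≤ n) :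
    Measurable[natFiltration X hX n] (X k) :=
  measurable_iff_comap_le.mpr
    (le_iSup₂ (f := fun k (_ : k ∈ Set.Iic n) => MeasurableSpace.comap (X k) inferInstance) k hk)

lemma natFiltration_le_comap_history (hX : ∀ n, Measurable (X n)) (n : ℕ) :
    natFiltration X hX n ≤ MeasurableSpace.comap (history X n) inferInstance := by
  refine iSup₂_le fun k hk => ?_
  have hXk : X k = (fun v => v ⟨k, Nat.lt_succ_of_le hk⟩) ∘ history X n := rfl
  rw [hXk, ← MeasurableSpace.comap_comp]
  exact MeasurableSpace.comap_mono (measurable_pi_apply _).comap_le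

lemma measurable_update_history_last (hX : ∀ n, Measurable (X n)) (n : ℕ) (j : Fin N) :
    Measurable[natFiltration X hX (n - 1)]
      fun ω => Function.update (history X n ω) (Fin.last n) j := by
  refine (@measurable_pi_iff Ω _ (fun _ => Fin N) (natFiltration X hX (n - 1)) _ _).mpr fun i => ?_
  rcases eq_or_ne i (Fin.last n) with rfl | hi
  · simp only [Function.update_self]
    exact measurable_const
  · simp only [Function.update_of_ne hi]
    exact measurable_natFiltration_of_le hX (Nat.le_sub_one_of_lt (Fin.lt_last_iff_ne_last.mpr hi))

lemma exists_predictable_coeffs_of_measurable_natFiltration (hX : ∀ n, Measurable (X n))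
    {n : ℕ} {Y : Ω → ℝ} (hY : Measurable[natFiltration X hX n] Y) :
    ∃ G : Fin N → Ω → ℝ, (∀ j, Measurable[natFiltration X hX (n - 1)] (G j)) ∧
      Y = fun ω => G (X n ω) ω := by
  obtain ⟨φ, hφ, rfl⟩ :=
    (hY.mono (natFiltration_le_comap_history hX n) le_rfl).exists_eq_measurable_comp
  refine ⟨fun j ω => φ (Function.update (history X n ω) (Fin.last n) j),
    fun j => hφ.comp (measurable_update_history_last hX n j), ?_⟩
  ext ω
  exact congrArg φ (Function.update_eq_self (Fin.last n) (history X n ω)).symm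

end NatFiltration

theorem delta_basis_representation_general
    {Ω : Type*} [m : MeasurableSpace Ω] {N : ℕ}
    (X : ℕ → Ω → Fin N) (hX : ∀ n, Measurable (X n))
    (P₀ : Measure Ω) [IsProbabilityMeasure P₀]
    (n : ℕ)
    (P₀mat : Matrix (Fin N) (Fin N) ℝ)
    (hCond : ∀ j : Fin N,
      P₀[ind X n j | (natFiltration X hX) (n - 1)]
        =ᵐ[P₀] fun ω => P₀mat (X (n - 1) ω) j)
    (Y : Ω → ℝ) (hY_int : Integrable Y P₀)
    (hY_meas : Measurable[(natFiltration X hX) n] Y)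
    (hY_cond : P₀[Y | (natFiltration X hX) (n - 1)] =ᵐ[P₀] 0) :
    ∃ G : Fin N → Ω → ℝ,
      (∀ j, Measurable[(natFiltration X hX) (n - 1)] (G j)) ∧
      Y =ᵐ[P₀] fun ω => ∑ j, G j ω * (ind X n j ω - P₀mat (X (n - 1) ω) j) := by
  obtain ⟨G, hG, rfl⟩ := exists_predictable_coeffs_of_measurable_natFiltration hX hY_meas
  exact ⟨G, hG, eq_sum_mul_sub_of_condExp_eq_zero (p := fun j ω => P₀mat (X (n - 1) ω) j)
    (hX n) (fun j => (hG j).stronglyMeasurable) hCond hY_int hY_cond⟩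

/-- (Martingale-increment representation.) Fix `n ≥ 1`. If under `P₀` the
conditional law of `X n` given `F (n-1)` is `P₀mat (X (n-1), ·)` with `P₀mat` a stochastic
matrix with strictly positive entries, then every integrable `F n`-measurable random
variable `Y` with `E₀[Y | F (n-1)] = 0` a.s. admits a representation
`Y = ∑_j G j · (𝟙{X n = j} - P₀mat (X (n-1), j))` with `F (n-1)`-measurable coefficients. -/
theorem delta_basis_representation
    {Ω : Type*} [m : MeasurableSpace Ω] {N : ℕ} (hN : 1 ≤ N)
    (X : ℕ → Ω → Fin N) (hX : ∀ n, Measurable (X n))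
    (P₀ : Measure Ω) [IsProbabilityMeasure P₀]
    (n : ℕ) (hn : 1 ≤ n)
    (P₀mat : Matrix (Fin N) (Fin N) ℝ)
    (hP₀_stoch : IsStochasticMatrix P₀mat)
    (hP₀_pos : ∀ i j, 0 < P₀mat i j)
    (hCond : ∀ j : Fin N,
      P₀[ind X n j | (natFiltration X hX) (n - 1)]
        =ᵐ[P₀] fun ω => P₀mat (X (n - 1) ω) j)
    (Y : Ω → ℝ) (hY_int : Integrable Y P₀)
    (hY_meas : Measurable[(natFiltration X hX) n] Y)
    (hY_cond : P₀[Y | (natFiltration X hX) (n - 1)] =ᵐ[P₀] 0) :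
    ∃ G : Fin N → Ω → ℝ,
      (∀ j, Measurable[(natFiltration X hX) (n - 1)] (G j)) ∧
      Y =ᵐ[P₀] fun ω => ∑ j, G j ω * (ind X n j ω - P₀mat (X (n - 1) ω) j) :=
  delta_basis_representation_general (m := m) X hX P₀ n P₀mat hCond Y hY_int hY_meas hY_cond
end
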